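/- arXiv:1012.5856 — 2 statements merged into one kernel-verified Lean document; each statement's English description precedes it below -/
import Mathlib

section
/- Let q ≥ 1 and let f : ℝ^{1+q} → [0,∞] be measurable. Writing u(v) = (1, v₁, …, v_q) ∈ ℝ^{1+q} for v ∈ ℝ^q, one has ∫_{ℝ^{1+q}} f(y) dy = ∫_{ℝ^q} ∫_{ℝ} f(e · u(v)) |e|^q de dv, where all integrals are with respect to Lebesgue measure. (This is the case K = 1, β = 1 of the paper's Jacobian Lemma 3 for the affine-shape decomposition Y = U E.) -/
open MeasureTheory
open scoped ENNReal

/-! Write `y = (e, w)` and integrate first over `w ∈ ℝ^q` (Tonelli). For `e ≠ 0` the substitution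
`w = e • v` has Jacobian `|e|^q`, and `(e, e • v) = e • u(v)`; the line `e = 0` is null, and a final
Tonelli swap puts the `e`-integral inside. -/

theorem lintegral_fin_cons {α : Type*} [MeasureSpace α] [SigmaFinite (volume : Measure α)]
    {n : ℕ} {f : (Fin (n + 1) → α) → ℝ≥0∞} (hf : Measurable f) :
    ∫⁻ y, f y = ∫⁻ a, ∫⁻ w : Fin n → α, f (Fin.cons a w) := by
  have hcons := (volume_preserving_piFinSuccAbove (fun _ : Fin (n + 1) => α) 0).symm
  have hcons_apply : ∀ p : α × (Fin n → α),
      (MeasurableEquiv.piFinSuccAbove (fun _ => α) 0).symm p = Fin.cons p.1 p.2 := fun p => by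
    simp [Fin.insertNthEquiv, Fin.insertNth_zero']
  rw [← hcons.lintegral_comp_emb (MeasurableEquiv.measurableEmbedding _), Measure.volume_eq_prod]
  refine (lintegral_prod _ (hf.comp hcons.measurable).aemeasurable).trans ?_
  simp only [Function.comp_apply, hcons_apply]

theorem lintegral_eq_abs_pow_finrank_mul_lintegral_comp_smul {E : Type*} [NormedAddCommGroup E]
    [NormedSpace ℝ E] [MeasurableSpace E] [BorelSpace E] [FiniteDimensional ℝ E]
    (μ : Measure E) [μ.IsAddHaarMeasure] (g : E → ℝ≥0∞) {r : ℝ} (hr : r ≠ 0) :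
    ∫⁻ x, g x ∂μ = ENNReal.ofReal (|r| ^ Module.finrank ℝ E) * ∫⁻ x, g (r • x) ∂μ := by
  have hpos : 0 < |r| ^ Module.finrank ℝ E := pow_pos (abs_pos.2 hr) _
  have hmap := lintegral_map_equiv (μ := μ) g (MeasurableEquiv.smul₀ r hr)
  rw [MeasurableEquiv.coe_smul₀, Measure.map_addHaar_smul μ hr] at hmap
  rw [← hmap, lintegral_smul_measure, abs_inv, abs_pow, smul_eq_mul,
    ENNReal.ofReal_inv_of_pos hpos, ← mul_assoc,
    ENNReal.mul_inv_cancel (ENNReal.ofReal_pos.2 hpos).ne' ENNReal.ofReal_ne_top, one_mul]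

theorem lintegral_cons_eq_lintegral_smul_cons_one {q : ℕ} (f : (Fin (q + 1) → ℝ) → ℝ≥0∞)
    {e : ℝ} (he : e ≠ 0) :
    ∫⁻ w : Fin q → ℝ, f (Fin.cons e w)
      = ∫⁻ v : Fin q → ℝ, f (e • (Fin.cons 1 v : Fin (q + 1) → ℝ)) * ENNReal.ofReal (|e| ^ q) := by
  have hcons (v : Fin q → ℝ) : (Fin.cons e (e • v) : Fin (q + 1) → ℝ) = e • Fin.cons 1 v := by
    -- `Matrix.smul_cons` is stated for `Matrix.vecCons`, which unfolds to `Fin.cons`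
    rw [← Matrix.vecCons, ← Matrix.vecCons, Matrix.smul_cons, smul_eq_mul, mul_one]
  rw [lintegral_eq_abs_pow_finrank_mul_lintegral_comp_smul volume _ he, Module.finrank_fin_fun,
    lintegral_mul_const' _ _ ENNReal.ofReal_ne_top, mul_comm]
  simp only [hcons]

theorem affine_jacobian_real_K_one_general (q : ℕ)
    (f : (Fin (q + 1) → ℝ) → ℝ≥0∞) (hf : Measurable f) :
    ∫⁻ y : Fin (q + 1) → ℝ, f y
      = ∫⁻ v : Fin q → ℝ, ∫⁻ e : ℝ,
          f (e • (Fin.cons 1 v : Fin (q + 1) → ℝ)) * ENNReal.ofReal (|e| ^ q) := by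
  calc ∫⁻ y, f y = ∫⁻ e : ℝ, ∫⁻ w : Fin q → ℝ, f (Fin.cons e w) := lintegral_fin_cons hf
    _ = ∫⁻ e : ℝ, ∫⁻ v : Fin q → ℝ,
          f (e • (Fin.cons 1 v : Fin (q + 1) → ℝ)) * ENNReal.ofReal (|e| ^ q) :=
        lintegral_congr_ae ((volume.ae_ne 0).mono
          fun _ he => lintegral_cons_eq_lintegral_smul_cons_one f he)
    _ = _ := lintegral_lintegral_swap (by fun_prop)

/-- The case `K = 1`, `β = 1` of the affine-shape Jacobian lemma: for nonnegative
measurable `f` on `ℝ^{1+q}`, writing `u(v) = (1, v₁, …, v_q)`,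
`∫_{ℝ^{1+q}} f(y) dy = ∫_{ℝ^q} ∫_ℝ f(e · u(v)) |e|^q de dv`. -/
theorem affine_jacobian_real_K_one (q : ℕ) (hq : 1 ≤ q)
    (f : (Fin (q + 1) → ℝ) → ℝ≥0∞) (hf : Measurable f) :
    ∫⁻ y : Fin (q + 1) → ℝ, f y
      = ∫⁻ v : Fin q → ℝ, ∫⁻ e : ℝ,
          f (e • (Fin.cons 1 v : Fin (q + 1) → ℝ)) * ENNReal.ofReal (|e| ^ q) :=
  affine_jacobian_real_K_one_general q f hf
end

section
/- Let p ≥ 2, let Σ be a positive definite Hermitian p×p complex matrix, and let h : ℝ → [0,∞) be measurable with ∫_{ℂ^p} h(‖x‖²) dx = 1 (Lebesgue measure on ℂ^p ≅ ℝ^{2p}). Let Y = (Y₁,…,Y_p) be a random vector in ℂ^p whose law has density y ↦ (det Σ)^{−1} h(y*Σ⁻¹y) with respect to Lebesgue measure (y*Σ⁻¹y is real since Σ is Hermitian). Then Y₁ ≠ 0 almost surely, and V = (Y₂/Y₁, …, Y_p/Y₁) ∈ ℂ^{p−1} has density v ↦ (Γ(p)/π^{p−1}) · (det Σ)^{−1}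 · ( u(v)* Σ⁻¹ u(v) )^{−p} with respect to Lebesgue measure on ℂ^{p−1}, where u(v) = (1, v₁, …, v_{p−1}) ∈ ℂ^p. In particular, the distribution of V does not depend on h. (This is the case K = 1, β = 2 of the paper's Corollary 1.) -/
/-!
Put `y = w • (1, v)` with `w = y₁ ≠ 0` and `v` the affine shape of `y`. Lebesgue measure on
`ℂ^{q+1}` becomes `|w|^{2q} dw dv`, and `y* A y = |w|² · u(v)* A u(v)`. Rescaling `w` shows that
the shape of a vector with density `g(y* A y)` has density `c_g · (u(v)* A u(v))^{-(q+1)}`, where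
`c_g = ∫_ℂ |w|^{2q} g(|w|²) dw` (`radialMoment q g`). Comparing the generator `h` at `A = 1` with
the Gaussian generator `e^{-s}`, whose total mass is `π^{q+1}` and whose `c_g` is `π Γ(q+1)`,
gives `c_h = Γ(q+1)/π^q`.
-/

open MeasureTheory Matrix Real
open scoped ENNReal ComplexOrder

section ComplexScaling

variable {E : Type*} [NormedAddCommGroup E] [NormedSpace ℂ E] [FiniteDimensional ℂ E]

theorem LinearMap.det_restrictScalars_complex_smul_id (w : ℂ) :
    LinearMap.det ((w • LinearMap.id : E →ₗ[ℂ] E).restrictScalars ℝ)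
      = Complex.normSq w ^ Module.finrank ℂ E := by
  rw [LinearMap.det_restrictScalars, LinearMap.det_smul, LinearMap.det_id, mul_one, map_pow,
    Algebra.norm_complex_eq]
  rfl

variable [MeasurableSpace E] [BorelSpace E] (μ : Measure E) [μ.IsAddHaarMeasure]

theorem lintegral_eq_mul_lintegral_comp_complex_smul {w : ℂ} (hw : w ≠ 0) (f : E → ℝ≥0∞) :
    ∫⁻ x, f x ∂μ = ENNReal.ofReal (Complex.normSq w ^ Module.finrank ℂ E) * ∫⁻ x, f (w • x) ∂μ := by
  have hdet := LinearMap.det_restrictScalars_complex_smul_id (E := E) w⁻¹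
  have hmap := Measure.map_linearMap_addHaar_eq_smul_addHaar μ
    (hdet ▸ pow_ne_zero _ (Complex.normSq_pos.2 (inv_ne_zero hw)).ne')
  rw [hdet, map_inv₀, inv_pow, inv_inv, abs_of_nonneg (pow_nonneg (Complex.normSq_nonneg w) _)]
    at hmap
  rw [← smul_eq_mul, ← lintegral_smul_measure, ← hmap]
  change _ = ∫⁻ x, f (w • x) ∂(Measure.map (MeasurableEquiv.smul₀ w⁻¹ (inv_ne_zero hw)) μ)
  rw [lintegral_map_equiv]
  simp [smul_smul, hw]

end ComplexScaling

theorem lintegral_fin_succ_eq_lintegral_cons {n : ℕ} {α : Type*} [MeasureSpace α]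
    [SigmaFinite (volume : Measure α)] {F : (Fin (n + 1) → α) → ℝ≥0∞} (hF : Measurable F) :
    ∫⁻ x, F x = ∫⁻ a, ∫⁻ v, F (Fin.cons a v) := by
  have he := (measurePreserving_piFinSuccAbove (fun _ : Fin (n + 1) => (volume : Measure α)) 0).symm
  rw [volume_pi, ← he.lintegral_comp hF, lintegral_prod]
  · simp [MeasurableEquiv.piFinSuccAbove_symm_apply, Fin.insertNthEquiv, Fin.insertNth_zero',
      volume_pi]
  · exact (hF.comp he.measurable).aemeasurable

theorem lintegral_eq_lintegral_lintegral_smul_cons_one {q : ℕ}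
    {F : (Fin (q + 1) → ℂ) → ℝ≥0∞} (hF : Measurable F) :
    ∫⁻ y, F y = ∫⁻ w : ℂ, ∫⁻ v : Fin q → ℂ,
      ENNReal.ofReal (Complex.normSq w ^ q) * F (w • Fin.cons 1 v) := by
  rw [lintegral_fin_succ_eq_lintegral_cons hF]
  refine lintegral_congr_ae ((volume.ae_ne 0).mono fun w hw => ?_)
  dsimp only
  rw [lintegral_eq_mul_lintegral_comp_complex_smul volume hw,
    lintegral_const_mul' _ _ ENNReal.ofReal_ne_top, Module.finrank_fin_fun]
  congr 1
  refine lintegral_congr fun v => ?_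
  rw [← Matrix.vecCons, ← Matrix.vecCons, Matrix.smul_cons, smul_eq_mul, mul_one]

noncomputable def radialMoment (q : ℕ) (g : ℝ → ℝ) : ℝ≥0∞ :=
  ∫⁻ w : ℂ, ENNReal.ofReal (Complex.normSq w ^ q * g (Complex.normSq w))

theorem lintegral_normSq_pow_mul_comp_normSq_mul {τ : ℝ} (hτ : 0 < τ) (q : ℕ) (g : ℝ → ℝ) :
    ∫⁻ w : ℂ, ENNReal.ofReal (Complex.normSq w ^ q * g (Complex.normSq w * τ))
      = ENNReal.ofReal (τ ^ (-((q : ℝ) + 1))) * radialMoment q g := by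
  set c : ℂ := Complex.ofReal (√τ)⁻¹
  have hc : Complex.normSq c = τ⁻¹ := by
    rw [Complex.normSq_ofReal, ← mul_inv, Real.mul_self_sqrt hτ.le]
  have hc0 : c ≠ 0 := by
    rw [← Complex.normSq_pos, hc]; positivity
  rw [lintegral_eq_mul_lintegral_comp_complex_smul volume hc0, Module.finrank_self, pow_one, hc,
    radialMoment, ← lintegral_const_mul' _ _ ENNReal.ofReal_ne_top,
    ← lintegral_const_mul' _ _ ENNReal.ofReal_ne_top]
  refine lintegral_congr fun z => ?_
  rw [smul_eq_mul, Complex.normSq_mul, hc, ← ENNReal.ofReal_mul (by positivity),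
    ← ENNReal.ofReal_mul (by positivity), Real.rpow_neg hτ.le, Real.rpow_add_one hτ.ne',
    Real.rpow_natCast, mul_comm (τ⁻¹ * _), mul_inv_cancel_left₀ hτ.ne']
  congr 1
  rw [mul_pow, inv_pow]
  field_simp

section HermForm

variable {ι : Type*} [Fintype ι]

noncomputable def hermForm (A : Matrix ι ι ℂ) (y : ι → ℂ) : ℝ :=
  (star y ⬝ᵥ (A *ᵥ y)).re

theorem hermForm_smul (A : Matrix ι ι ℂ) (w : ℂ) (y : ι → ℂ) :
    hermForm A (w • y) = Complex.normSq w * hermForm A y := by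
  rw [hermForm, hermForm, star_smul, mulVec_smul, smul_dotProduct, dotProduct_smul, smul_eq_mul,
    smul_eq_mul, ← mul_assoc, Complex.star_def, ← Complex.normSq_eq_conj_mul_self,
    Complex.re_ofReal_mul]

@[fun_prop]
theorem continuous_hermForm (A : Matrix ι ι ℂ) : Continuous (hermForm A) := by
  unfold hermForm
  fun_prop

theorem hermForm_one [DecidableEq ι] (y : ι → ℂ) : hermForm 1 y = ∑ i, ‖y i‖ ^ 2 := by
  simp [hermForm, dotProduct, Complex.sq_norm, Complex.normSq_apply, Complex.mul_re]

theorem Matrix.PosDef.hermForm_pos {A : Matrix ι ι ℂ} (hA : A.PosDef) {y : ι → ℂ} (hy : y ≠ 0) :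
    0 < hermForm A y := by
  simpa [hermForm] using hA.re_dotProduct_pos hy

end HermForm

section AffineShape

variable {q : ℕ}

noncomputable def affineShape (y : Fin (q + 1) → ℂ) : Fin q → ℂ := fun i => y i.succ / y 0

@[fun_prop]
theorem measurable_affineShape : Measurable (affineShape (q := q)) :=
  measurable_pi_lambda _ fun i => (measurable_pi_apply i.succ).div (measurable_pi_apply 0)

theorem affineShape_smul_cons_one {w : ℂ} (hw : w ≠ 0) (v : Fin q → ℂ) :
    affineShape (w • (Fin.cons 1 v : Fin (q + 1) → ℂ)) = v := by
  funext i
  simp [affineShape, hw]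

end AffineShape

section ShapeLaw

variable {q : ℕ} {A : Matrix (Fin (q + 1)) (Fin (q + 1)) ℂ} {g : ℝ → ℝ}

theorem lintegral_mul_comp_affineShape (hA : A.PosDef) (hg : Measurable g)
    {φ : (Fin q → ℂ) → ℝ≥0∞} (hφ : Measurable φ) :
    ∫⁻ y, ENNReal.ofReal (g (hermForm A y)) * φ (affineShape y)
      = radialMoment q g * ∫⁻ v, ENNReal.ofReal
          (hermForm A (Fin.cons 1 v) ^ (-((q : ℝ) + 1))) * φ v := by
  set t : (Fin q → ℂ) → ℝ := fun v => hermForm A (Fin.cons 1 v)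
  have ht_pos : ∀ v, 0 < t v := fun v =>
    hA.hermForm_pos fun h => one_ne_zero (congrFun h 0)
  calc ∫⁻ y, ENNReal.ofReal (g (hermForm A y)) * φ (affineShape y)
      = ∫⁻ w : ℂ, ∫⁻ v : Fin q → ℂ, ENNReal.ofReal (Complex.normSq w ^ q) *
          (ENNReal.ofReal (g (hermForm A (w • (Fin.cons 1 v : Fin (q + 1) → ℂ)))) *
            φ (affineShape (w • (Fin.cons 1 v : Fin (q + 1) → ℂ)))) :=
        lintegral_eq_lintegral_lintegral_smul_cons_one
          (F := fun y => ENNReal.ofReal (g (hermForm A y)) * φ (affineShape y)) (by fun_prop)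
    _ = ∫⁻ w : ℂ, ∫⁻ v,
          ENNReal.ofReal (Complex.normSq w ^ q * g (Complex.normSq w * t v)) * φ v := by
        refine lintegral_congr_ae ((volume.ae_ne 0).mono fun w hw => lintegral_congr fun v => ?_)
        rw [hermForm_smul, affineShape_smul_cons_one hw, ← mul_assoc,
          ← ENNReal.ofReal_mul (pow_nonneg (Complex.normSq_nonneg w) q)]
    _ = ∫⁻ v, ∫⁻ w : ℂ,
          ENNReal.ofReal (Complex.normSq w ^ q * g (Complex.normSq w * t v)) * φ v :=
        lintegral_lintegral_swap (by fun_prop)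
    _ = ∫⁻ v, radialMoment q g * (ENNReal.ofReal (t v ^ (-((q : ℝ) + 1))) * φ v) := by
        refine lintegral_congr fun v => ?_
        rw [lintegral_mul_const, lintegral_normSq_pow_mul_comp_normSq_mul (ht_pos v)]
        · ring
        · fun_prop
    _ = _ := lintegral_const_mul _ (by fun_prop)

theorem map_affineShape_withDensity (hA : A.PosDef) (hg : Measurable g) :
    (volume.withDensity fun y => ENNReal.ofReal (g (hermForm A y))).map affineShape
      = radialMoment q g • volume.withDensity fun v : Fin q → ℂ =>
          ENNReal.ofReal (hermForm A (Fin.cons 1 v) ^ (-((q : ℝ) + 1))) := by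
  refine Measure.ext_of_lintegral _ fun φ hφ => ?_
  rw [lintegral_map hφ measurable_affineShape, lintegral_smul_measure,
    lintegral_withDensity_eq_lintegral_mul _ (by fun_prop) (by fun_prop),
    lintegral_withDensity_eq_lintegral_mul _ (by fun_prop) hφ]
  exact lintegral_mul_comp_affineShape hA hg hφ

end ShapeLaw

theorem integral_normSq_pow_mul_exp_neg_normSq (k : ℕ) :
    ∫ z : ℂ, Complex.normSq z ^ k * exp (-Complex.normSq z) = π * Gamma (k + 1) := by
  have h := Complex.integral_rpow_mul_exp_neg_rpow (p := 2) (q := 2 * k) one_le_two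
    (by have : (0 : ℝ) ≤ k := k.cast_nonneg; linarith)
  simp_rw [Real.rpow_mul (norm_nonneg _), Real.rpow_two, Complex.sq_norm, Real.rpow_natCast] at h
  rw [h, show (2 * (k : ℝ) + 2) / 2 = k + 1 by ring]
  ring

theorem lintegral_normSq_pow_mul_exp_neg_normSq (k : ℕ) :
    ∫⁻ z : ℂ, ENNReal.ofReal (Complex.normSq z ^ k * exp (-Complex.normSq z))
      = ENNReal.ofReal (π * Gamma (k + 1)) := by
  have hint : Integrable fun z : ℂ => Complex.normSq z ^ k * exp (-Complex.normSq z) :=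
    .of_integral_ne_zero (by
      rw [integral_normSq_pow_mul_exp_neg_normSq]
      exact (mul_pos pi_pos (Gamma_pos_of_pos k.cast_add_one_pos)).ne')
  rw [← ofReal_integral_eq_lintegral_ofReal hint (ae_of_all _ fun z =>
    mul_nonneg (pow_nonneg (Complex.normSq_nonneg z) k) (exp_pos _).le),
    integral_normSq_pow_mul_exp_neg_normSq]

theorem integral_exp_neg_sq_norm_complex : ∫ z : ℂ, exp (-‖z‖ ^ 2) = π := by
  simpa [Complex.sq_norm] using integral_normSq_pow_mul_exp_neg_normSq 0

theorem lintegral_exp_neg_sum_sq_norm {ι : Type*} [Fintype ι] :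
    ∫⁻ y : ι → ℂ, ENNReal.ofReal (exp (-∑ i, ‖y i‖ ^ 2)) = ENNReal.ofReal π ^ Fintype.card ι := by
  have hint : Integrable fun z : ℂ => exp (-‖z‖ ^ 2) :=
    .of_integral_ne_zero (by rw [integral_exp_neg_sq_norm_complex]; exact pi_ne_zero)
  have hprod : Integrable fun y : ι → ℂ => ∏ i, exp (-‖y i‖ ^ 2) :=
    Integrable.fintype_prod fun _ => hint
  simp_rw [← Finset.sum_neg_distrib, exp_sum]
  rw [← ofReal_integral_eq_lintegral_ofReal hprod
      (ae_of_all _ fun y => Finset.prod_nonneg fun i _ => (exp_pos _).le),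
    integral_fintype_prod_volume_eq_pow (fun z : ℂ => exp (-‖z‖ ^ 2)),
    integral_exp_neg_sq_norm_complex, ENNReal.ofReal_pow pi_nonneg]

theorem radialMoment_exp_neg (q : ℕ) :
    radialMoment q (fun s => exp (-s)) = ENNReal.ofReal (π * Gamma (q + 1)) :=
  lintegral_normSq_pow_mul_exp_neg_normSq q

theorem radialMoment_const_mul {c : ℝ} (hc : 0 ≤ c) (q : ℕ) (g : ℝ → ℝ) :
    radialMoment q (fun s => c * g s) = ENNReal.ofReal c * radialMoment q g := by
  rw [radialMoment, radialMoment, ← lintegral_const_mul' _ _ ENNReal.ofReal_ne_top]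
  refine lintegral_congr fun w => ?_
  rw [← ENNReal.ofReal_mul hc, mul_left_comm]

theorem lintegral_comp_sum_sq_norm {q : ℕ} {g : ℝ → ℝ} (hg : Measurable g) :
    ∫⁻ y : Fin (q + 1) → ℂ, ENNReal.ofReal (g (∑ i, ‖y i‖ ^ 2))
      = radialMoment q g * ∫⁻ v : Fin q → ℂ,
          ENNReal.ofReal (hermForm 1 (Fin.cons 1 v) ^ (-((q : ℝ) + 1))) := by
  simpa [hermForm_one] using lintegral_mul_comp_affineShape PosDef.one hg measurable_one

theorem radialMoment_eq_of_lintegral_eq_one {q : ℕ} {g : ℝ → ℝ} (hg : Measurable g)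
    (hgen : ∫⁻ y : Fin (q + 1) → ℂ, ENNReal.ofReal (g (∑ i, ‖y i‖ ^ 2)) = 1) :
    radialMoment q g = ENNReal.ofReal (Gamma (q + 1) / π ^ q) := by
  rw [lintegral_comp_sum_sq_norm hg] at hgen
  set I := ∫⁻ v : Fin q → ℂ, ENNReal.ofReal (hermForm 1 (Fin.cons 1 v) ^ (-((q : ℝ) + 1)))
  have hΓ : 0 < Gamma (q + 1) := Gamma_pos_of_pos q.cast_add_one_pos
  have hI : I = ENNReal.ofReal (π ^ q / Gamma (q + 1)) := by
    have hgauss := lintegral_comp_sum_sq_norm (q := q) (measurable_neg.exp)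
    rw [lintegral_exp_neg_sum_sq_norm, radialMoment_exp_neg, Fintype.card_fin,
      ← ENNReal.ofReal_pow pi_nonneg] at hgauss
    refine (ENNReal.mul_right_inj (by positivity) ENNReal.ofReal_ne_top).1 (hgauss.symm.trans ?_)
    rw [← ENNReal.ofReal_mul (by positivity)]
    congr 1
    field_simp
    ring
  rw [hI] at hgen
  rw [ENNReal.eq_inv_of_mul_eq_one_left hgen, ← ENNReal.ofReal_inv_of_pos (by positivity), inv_div]

theorem central_affine_shape_density_complex_general (q : ℕ)
    (S : Matrix (Fin (q + 1)) (Fin (q + 1)) ℂ) (hS : S.PosDef)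
    (h : ℝ → ℝ) (hmeas : Measurable h)
    (hgen : ∫⁻ x : Fin (q + 1) → ℂ, ENNReal.ofReal (h (∑ i, ‖x i‖ ^ 2)) = 1)
    (Ω : Type*) [MeasureSpace Ω]
    (Y : Ω → Fin (q + 1) → ℂ) (hY : Measurable Y)
    (hlaw : Measure.map Y volume
      = volume.withDensity fun y =>
          ENNReal.ofReal (S.det.re⁻¹ * h ((star y ⬝ᵥ (S⁻¹ *ᵥ y)).re))) :
    (∀ᵐ ω, Y ω 0 ≠ 0) ∧
      Measure.map (fun ω (i : Fin q) => Y ω i.succ / Y ω 0) volume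
        = volume.withDensity fun v : Fin q → ℂ =>
            ENNReal.ofReal
              (Real.Gamma ((q : ℝ) + 1) / π ^ q * S.det.re⁻¹ *
                ((star (Fin.cons 1 v : Fin (q + 1) → ℂ) ⬝ᵥ
                    (S⁻¹ *ᵥ (Fin.cons 1 v : Fin (q + 1) → ℂ))).re) ^ (-((q : ℝ) + 1))) := by
  have hdet : 0 < S.det.re⁻¹ := inv_pos.2 (Complex.pos_iff.1 hS.det_pos).1
  refine ⟨ae_of_ae_map (p := fun y => y 0 ≠ 0) hY.aemeasurable ?_, ?_⟩
  · rw [hlaw]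
    exact (withDensity_absolutelyContinuous _ _).ae_le (Measure.ae_eval_ne _ 0 0)
  calc Measure.map (fun ω (i : Fin q) => Y ω i.succ / Y ω 0) volume
      = (Measure.map Y volume).map affineShape := (Measure.map_map measurable_affineShape hY).symm
    _ = radialMoment q (fun s => S.det.re⁻¹ * h s) • volume.withDensity fun v : Fin q → ℂ =>
          ENNReal.ofReal (hermForm S⁻¹ (Fin.cons 1 v) ^ (-((q : ℝ) + 1))) := by
        rw [hlaw]
        exact map_affineShape_withDensity (g := fun s => S.det.re⁻¹ * h s) hS.inv
          (hmeas.const_mul _)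
    _ = _ := by
        rw [radialMoment_const_mul hdet.le, radialMoment_eq_of_lintegral_eq_one hmeas hgen,
          ← withDensity_smul' _ _ (by finiteness)]
        congr 1
        funext v
        rw [Pi.smul_apply, smul_eq_mul, ← ENNReal.ofReal_mul hdet.le,
          ← ENNReal.ofReal_mul (by positivity), mul_comm S.det.re⁻¹]
        rfl

/-- The case `K = 1`, `β = 2` of the central affine-shape density (Corollary 1):
if `Y` is complex elliptically distributed in `ℂ^p` (`p = q+1 ≥ 2`) with density
`(det Σ)^{-1} h(y* Σ⁻¹ y)`, then `Y₁ ≠ 0` a.s. and `V = (Y₂/Y₁, …, Y_p/Y₁)` has density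
`(Γ(p)/π^{p-1}) (det Σ)^{-1} (u(v)* Σ⁻¹ u(v))^{-p}` with `u(v) = (1, v)`;
in particular the law of `V` does not depend on the generator `h`. -/
theorem central_affine_shape_density_complex (q : ℕ) (hq : 1 ≤ q)
    (S : Matrix (Fin (q + 1)) (Fin (q + 1)) ℂ) (hS : S.PosDef)
    (h : ℝ → ℝ) (hmeas : Measurable h) (hnonneg : ∀ z, 0 ≤ h z)
    (hgen : ∫⁻ x : Fin (q + 1) → ℂ, ENNReal.ofReal (h (∑ i, ‖x i‖ ^ 2)) = 1)
    (Ω : Type*) [MeasureSpace Ω] [IsProbabilityMeasure (volume : Measure Ω)]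
    (Y : Ω → Fin (q + 1) → ℂ) (hY : Measurable Y)
    (hlaw : Measure.map Y volume
      = volume.withDensity fun y =>
          ENNReal.ofReal (S.det.re⁻¹ * h ((star y ⬝ᵥ (S⁻¹ *ᵥ y)).re))) :
    (∀ᵐ ω, Y ω 0 ≠ 0) ∧
      Measure.map (fun ω (i : Fin q) => Y ω i.succ / Y ω 0) volume
        = volume.withDensity fun v : Fin q → ℂ =>
            ENNReal.ofReal
              (Real.Gamma ((q : ℝ) + 1) / π ^ q * S.det.re⁻¹ *
                ((star (Fin.cons 1 v : Fin (q + 1) → ℂ) ⬝ᵥ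
                    (S⁻¹ *ᵥ (Fin.cons 1 v : Fin (q + 1) → ℂ))).re) ^ (-((q : ℝ) + 1))) :=
  central_affine_shape_density_complex_general q S hS h hmeas hgen Ω Y hY hlaw
end
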